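/- Let P, Q be Laurent polynomials with integer coefficients in x_1,...,x_d, let A(n) = ct[P(x)^n Q(x)], and let p be a prime. Then for all n ≥ 0 and all k ∈ {0,...,p−1}, A(pn + k) ≡ ct[P(x)^n · Λ_p[P(x)^k Q(x)]] modulo p. -/

import Mathlib

/-- Laurent polynomials with integer coefficients in `d` variables,
with exponent vectors in `ℤ^d`. -/
abbrev LP (d : ℕ) := AddMonoidAlgebra ℤ (Fin d → ℤ)

/-- `dilate p F` is `F(x^p)`, obtained by substituting `x_i^p` for `x_i`. -/
noncomputable def dilate {d : ℕ} (p : ℕ) (F : LP d) : LP d :=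
  AddMonoidAlgebra.ofCoeff (Finsupp.mapDomain (fun k => p • k) F.coeff)

/-- The Cartier operator `Λ_p`: the coefficient of `x^k` in `cartier p hp F`
is the coefficient of `x^(p•k)` in `F`. -/
noncomputable def cartier {d : ℕ} (p : ℕ) (hp : p ≠ 0) (F : LP d) : LP d :=
  AddMonoidAlgebra.ofCoeff (Finsupp.comapDomain (fun k => p • k) F.coeff
    ((smul_right_injective (Fin d → ℤ) hp).injOn))

section Aux

variable {d p : ℕ}

/-- `dilate` with general coefficients. -/
noncomputable def dilateR {R : Type*} [CommRing R] (d p : ℕ)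
    (F : AddMonoidAlgebra R (Fin d → ℤ)) : AddMonoidAlgebra R (Fin d → ℤ) :=
  AddMonoidAlgebra.ofCoeff (Finsupp.mapDomain (fun k => p • k) F.coeff)

/-- `cartier` with general coefficients. -/
noncomputable def cartierR {R : Type*} [CommRing R] (d : ℕ) {p : ℕ} (hp : p ≠ 0)
    (F : AddMonoidAlgebra R (Fin d → ℤ)) : AddMonoidAlgebra R (Fin d → ℤ) :=
  AddMonoidAlgebra.ofCoeff (Finsupp.comapDomain (fun k => p • k) F.coeff
    ((smul_right_injective (Fin d → ℤ) hp).injOn))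

/-- Key combinatorial identity: `ct[F(x^p) G(x)] = ct[F(x) (Λ_p G)(x)]`. -/
lemma key_ct {R : Type*} [CommRing R] (hp : p ≠ 0)
    (F G : AddMonoidAlgebra R (Fin d → ℤ)) :
    (dilateR d p F * G).coeff (0 : Fin d → ℤ)
      = (F * cartierR d hp G).coeff (0 : Fin d → ℤ) := by
  induction F using AddMonoidAlgebra.induction_linear with
  | zero =>
      have : dilateR d p (0 : AddMonoidAlgebra R (Fin d → ℤ)) = 0 := by
        unfold dilateR; rw [AddMonoidAlgebra.coeff_zero, Finsupp.mapDomain_zero]; rfl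
      rw [this, zero_mul, zero_mul]
  | add f g hf hg =>
      have : dilateR d p (f + g) = dilateR d p f + dilateR d p g := by
        unfold dilateR; rw [AddMonoidAlgebra.coeff_add, Finsupp.mapDomain_add]; rfl
      rw [this, add_mul, add_mul, AddMonoidAlgebra.coeff_add, AddMonoidAlgebra.coeff_add,
        Finsupp.add_apply, Finsupp.add_apply, hf, hg]
  | single a b =>
      have : dilateR d p (AddMonoidAlgebra.single a b)
          = (AddMonoidAlgebra.single (p • a) b : AddMonoidAlgebra R (Fin d → ℤ)) := by
        unfold dilateR; rw [AddMonoidAlgebra.coeff_single, Finsupp.mapDomain_single]; rfl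
      rw [this]
      rw [AddMonoidAlgebra.coeff_single_mul_apply, AddMonoidAlgebra.coeff_single_mul_apply]
      show b * G.coeff (-(p • a) + 0) = b * (cartierR d hp G).coeff (-a + 0)
      have h2 : (cartierR d hp G).coeff (-a + 0) = G.coeff (p • (-a + 0)) := rfl
      rw [h2]
      simp [smul_neg]

lemma frob_pow (hp : p.Prime) (F : AddMonoidAlgebra (ZMod p) (Fin d → ℤ)) :
    F ^ p = dilateR d p F := by
  haveI : Fact p.Prime := ⟨hp⟩
  haveI : CharP (AddMonoidAlgebra (ZMod p) (Fin d → ℤ)) p :=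
    charP_of_injective_ringHom
      (f := (AddMonoidAlgebra.singleZeroRingHom :
        ZMod p →+* AddMonoidAlgebra (ZMod p) (Fin d → ℤ)))
      (AddMonoidAlgebra.single_right_injective (m := (0 : Fin d → ℤ))) p
  induction F using AddMonoidAlgebra.induction_linear with
  | zero =>
      rw [zero_pow hp.ne_zero]
      unfold dilateR; rw [AddMonoidAlgebra.coeff_zero, Finsupp.mapDomain_zero]; rfl
  | add f g hf hg =>
      rw [add_pow_char, hf, hg]
      unfold dilateR; rw [AddMonoidAlgebra.coeff_add, Finsupp.mapDomain_add]; rfl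
  | single a b =>
      have : dilateR d p (AddMonoidAlgebra.single a b)
          = (AddMonoidAlgebra.single (p • a) b :
              AddMonoidAlgebra (ZMod p) (Fin d → ℤ)) := by
        unfold dilateR; rw [AddMonoidAlgebra.coeff_single, Finsupp.mapDomain_single]; rfl
      rw [this]
      show AddMonoidAlgebra.single a b ^ p = _
      rw [AddMonoidAlgebra.single_pow, ZMod.pow_card]

/-- Coefficientwise reduction mod `p` as a ring hom. -/
noncomputable def redHom (d p : ℕ) :
    LP d →+* AddMonoidAlgebra (ZMod p) (Fin d → ℤ) :=
  AddMonoidAlgebra.liftNCRingHom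
    ((AddMonoidAlgebra.singleZeroRingHom :
        ZMod p →+* AddMonoidAlgebra (ZMod p) (Fin d → ℤ)).comp
      (Int.castRingHom (ZMod p)))
    (AddMonoidAlgebra.of (ZMod p) (Fin d → ℤ))
    (fun _ _ => Commute.all _ _)

lemma redHom_single (x : Fin d → ℤ) (b : ℤ) :
    redHom d p (AddMonoidAlgebra.single x b) = AddMonoidAlgebra.single x ((b : ZMod p)) := by
  show AddMonoidAlgebra.liftNC _ _ (AddMonoidAlgebra.single x b) = _
  rw [AddMonoidAlgebra.liftNC_single]
  show AddMonoidAlgebra.single 0 ((b : ZMod p)) * AddMonoidAlgebra.single x 1 = _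
  rw [AddMonoidAlgebra.single_mul_single]
  simp

lemma redHom_apply (F : LP d) (a : Fin d → ℤ) :
    (redHom d p F).coeff a = ((F.coeff a : ℤ) : ZMod p) := by
  induction F using AddMonoidAlgebra.induction_linear with
  | zero => simp
  | add f g hf hg => rw [map_add, AddMonoidAlgebra.coeff_add, AddMonoidAlgebra.coeff_add, Finsupp.add_apply, Finsupp.add_apply, hf, hg]; push_cast; ring
  | single x b =>
      rw [redHom_single, AddMonoidAlgebra.coeff_single, AddMonoidAlgebra.coeff_single,
        Finsupp.single_apply, Finsupp.single_apply]
      split <;> simp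

lemma redHom_cartier (hp : p ≠ 0) (F : LP d) :
    redHom d p (cartier p hp F) = cartierR d hp (redHom d p F) := by
  apply AddMonoidAlgebra.coeff_injective
  ext a
  show (redHom d p (cartier p hp F)).coeff a = (redHom d p F).coeff (p • a)
  rw [redHom_apply, redHom_apply]
  rfl

end Aux

/-- If `A(n) = ct[P(x)^n Q(x)]` then, for `0 ≤ k ≤ p-1`,
`A(pn+k) ≡ ct[P(x)^n · Λ_p[P(x)^k Q(x)]]` modulo the prime `p`. -/
theorem ct_pow_mul_modEq {d : ℕ} (P Q : LP d) (p : ℕ) (hp : p.Prime)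
    (n k : ℕ) (hk : k < p) :
    (P ^ (p * n + k) * Q).coeff (0 : Fin d → ℤ)
      ≡ (P ^ n * cartier p hp.ne_zero (P ^ k * Q)).coeff (0 : Fin d → ℤ) [ZMOD (p : ℤ)] := by
  have := (ZMod.intCast_eq_intCast_iff
    ((P ^ (p * n + k) * Q).coeff (0 : Fin d → ℤ))
    ((P ^ n * cartier p hp.ne_zero (P ^ k * Q)).coeff (0 : Fin d → ℤ)) p).mp ?_
  · exact_mod_cast this
  rw [← redHom_apply, ← redHom_apply, map_mul, map_mul, map_pow, map_pow,
    redHom_cartier hp.ne_zero]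
  set X := redHom d p P with hX
  set Y := redHom d p Q with hY
  have h1 : X ^ (p * n + k) * Y = dilateR d p (X ^ n) * (X ^ k * Y) := by
    rw [← frob_pow hp (X ^ n), ← pow_mul, pow_add, mul_assoc, Nat.mul_comm n p]
  rw [h1, key_ct hp.ne_zero, map_mul, map_pow]
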